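/- For integers p ≥ 2, the average distance of the hexagonal square-cell configuration H(p) equals (158p⁴ − 35p² − 3)/(120p³ − 30p). -/

import Mathlib

/-!
For a coordinate `f`, `|f u - f v|` counts the cuts `c + 1/2` (`c ∈ ℤ`) separating `f u` and
`f v`, so `∑ u, ∑ v, |f u - f v| = 2 ∑ c, L c * R c`, where `L c` and `R c` count the points of
`H(p)` with `f ≤ c` and with `f > c`. The point reflection `(x, y) ↦ (p - x, 2p - 1 - y)`
preserves `H(p)`, so `R c` is again an `L`-count and only the cuts in the lower half of each range
are needed. There `L c` is quadratic in `c`: rows have length `p + 1 + 2y` for `y < p`, columns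
have height `2p + 2x` for `x ≤ 0` and `2p` for `0 ≤ x ≤ p`. Summing the quartics
`L c * (4p² - L c)` gives `15 W_x = 178p⁵ - 50p³ - 8p` and `15 W_y = 138p⁵ - 20p³ + 2p`,
with `|H(p)| = 4p²`.
-/

/-- The hexagonal square-cell configuration `H(p)` as a region of the integer
square lattice (equivalently `BT(3p−2, p, p)`). -/
noncomputable def hexRegion (p : ℤ) : Finset (ℤ × ℤ) :=
  (Finset.Icc (-(2 * p)) (2 * p) ×ˢ Finset.Icc (-(2 * p)) (2 * p)).filter fun z =>
    (0 ≤ z.2 ∧ z.2 ≤ p - 1 ∧ -z.2 ≤ z.1 ∧ z.1 ≤ p + z.2) ∨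
    (p ≤ z.2 ∧ z.2 ≤ 2 * p - 1 ∧ -(p - 1) + (z.2 - p) ≤ z.1 ∧ z.1 ≤ 2 * p - 1 - (z.2 - p))

open Finset

section Cuts

variable {α : Type*}

lemma abs_sub_eq_card_cuts {a b x y : ℤ} (hx : x ∈ Icc a b) (hy : y ∈ Icc a b) :
    |x - y| = #{c ∈ Ico a b | x ≤ c ∧ c < y} + #{c ∈ Ico a b | y ≤ c ∧ c < x} := by
  rw [mem_Icc] at hx hy
  have between (u v : ℤ) (hu : a ≤ u) (hv : v ≤ b) :
      {c ∈ Ico a b | u ≤ c ∧ c < v} = Ico u v := by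
    ext c
    simp only [mem_filter, mem_Ico]
    omega
  rw [between x y hx.1 hy.2, between y x hy.1 hx.2, Int.card_Ico, Int.card_Ico]
  rcases abs_cases (x - y) with ⟨h, _⟩ | ⟨h, _⟩ <;> omega

theorem sum_sum_abs_sub_eq_sum_cuts (s : Finset α) (f : α → ℤ) {a b : ℤ}
    (hf : ∀ u ∈ s, f u ∈ Icc a b) :
    ∑ u ∈ s, ∑ v ∈ s, |f u - f v| =
      2 * ∑ c ∈ Ico a b, (#{u ∈ s | f u ≤ c} * #{u ∈ s | c < f u} : ℤ) := by
  have hcut (u v : α) : (#{c ∈ Ico a b | f u ≤ c ∧ c < f v} : ℤ) =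
      ∑ c ∈ Ico a b, (if f u ≤ c then 1 else 0) * (if c < f v then 1 else 0) := by
    simp only [card_filter, ite_zero_mul_ite_zero, mul_one, Nat.cast_sum, Nat.cast_ite,
      Nat.cast_one, Nat.cast_zero]
  calc ∑ u ∈ s, ∑ v ∈ s, |f u - f v|
      = ∑ u ∈ s, ∑ v ∈ s, ((#{c ∈ Ico a b | f u ≤ c ∧ c < f v} : ℤ) +
          #{c ∈ Ico a b | f v ≤ c ∧ c < f u}) :=
        sum_congr rfl fun u hu => sum_congr rfl fun v hv =>
          abs_sub_eq_card_cuts (hf u hu) (hf v hv)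
    _ = 2 * ∑ u ∈ s, ∑ v ∈ s, (#{c ∈ Ico a b | f u ≤ c ∧ c < f v} : ℤ) := by
        rw [sum_congr rfl fun u _ => sum_add_distrib, sum_add_distrib,
          sum_comm (f := fun u v => (#{c ∈ Ico a b | f v ≤ c ∧ c < f u} : ℤ))]
        ring
    _ = 2 * ∑ c ∈ Ico a b, ∑ u ∈ s, ∑ v ∈ s,
          (if f u ≤ c then 1 else 0) * (if c < f v then 1 else 0) := by
        simp only [hcut]
        rw [sum_congr rfl fun u _ => sum_comm, sum_comm]
    _ = 2 * ∑ c ∈ Ico a b, (#{u ∈ s | f u ≤ c} * #{u ∈ s | c < f u} : ℤ) := by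
        simp only [card_filter, Nat.cast_sum, Nat.cast_ite, Nat.cast_one, Nat.cast_zero,
          sum_mul_sum]

lemma card_filter_le_add_one (s : Finset α) (f : α → ℤ) (c : ℤ) :
    #{u ∈ s | f u ≤ c + 1} = #{u ∈ s | f u ≤ c} + #{u ∈ s | f u = c + 1} := by
  classical
  rw [← card_union_of_disjoint (disjoint_filter.2 fun u _ h => by omega), ← filter_or]
  congr 1
  ext u
  simp only [mem_filter]
  exact and_congr_right fun _ => by omega

lemma card_filter_lt_eq_card_sub {β : Type*} [LinearOrder β] (s : Finset α) (f : α → β) (c : β) :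
    (#{u ∈ s | c < f u} : ℤ) = #s - #{u ∈ s | f u ≤ c} := by
  rw [← card_filter_add_card_filter_not (s := s) (fun u => f u ≤ c)]
  simp only [not_le]
  push_cast
  ring

lemma card_filter_lt_eq_card_filter_le_of_involution (s : Finset α) (f : α → ℤ) (σ : α → α)
    (k : ℤ) (hσ : ∀ u ∈ s, σ u ∈ s) (hσσ : ∀ u ∈ s, σ (σ u) = u)
    (hf : ∀ u ∈ s, f u + f (σ u) = k + 1) (c : ℤ) :
    #{u ∈ s | c < f u} = #{u ∈ s | f u ≤ k - c} := by
  refine card_nbij' σ σ ?_ ?_ (fun u hu => hσσ u (mem_filter.1 hu).1)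
    (fun u hu => hσσ u (mem_filter.1 hu).1)
  all_goals
    intro u hu
    simp only [mem_coe, mem_filter] at hu ⊢
    have := hf u hu.1
    exact ⟨hσ u hu.1, by omega⟩

end Cuts

lemma card_filter_snd_eq {α β : Type*} [DecidableEq β] {s : Finset (α × β)} {t : Finset α}
    {y : β} (h : ∀ x, (x, y) ∈ s ↔ x ∈ t) : #{z ∈ s | z.2 = y} = #t := by
  refine card_nbij' Prod.fst (·, y) (fun z hz => ?_) (fun x hx => ?_) (fun z hz => ?_)
    (fun _ _ => rfl)
  · rw [mem_coe, mem_filter] at hz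
    exact (h _).1 (hz.2 ▸ hz.1)
  · exact mem_filter.2 ⟨(h x).2 hx, rfl⟩
  · exact Prod.ext rfl (mem_filter.1 hz).2.symm

lemma card_filter_fst_eq {α β : Type*} [DecidableEq α] {s : Finset (α × β)} {t : Finset β}
    {x : α} (h : ∀ y, (x, y) ∈ s ↔ y ∈ t) : #{z ∈ s | z.1 = x} = #t := by
  refine card_nbij' Prod.snd (x, ·) (fun z hz => ?_) (fun y hy => ?_) (fun z hz => ?_)
    (fun _ _ => rfl)
  · rw [mem_coe, mem_filter] at hz
    exact (h _).1 (hz.2 ▸ hz.1)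
  · exact mem_filter.2 ⟨(h y).2 hy, rfl⟩
  · exact Prod.ext (mem_filter.1 hz).2.symm rfl

lemma sum_Ico_int_sub {M : Type*} [AddCommGroup M] (G : ℤ → M) {a b : ℤ} (hab : a ≤ b) :
    ∑ c ∈ Ico a b, (G (c + 1) - G c) = G b - G a := by
  induction b, hab using Int.leInduction with
  | base => simp
  | succ b hab ih => rw [← sum_Ico_add_eq_sum_Ico_add_one hab, ih]; abel

lemma sum_Ico_eq_add_of_reflect {M : Type*} [AddCommMonoid M] (T : ℤ → M) {a b m n k : ℤ}
    (ham : a ≤ m) (hmb : m ≤ b) (hmn : m + n = a + b) (hk : k + 1 = a + b)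
    (hT : ∀ c, T (k - c) = T c) :
    ∑ c ∈ Ico a b, T c = ∑ c ∈ Ico a m, T c + ∑ c ∈ Ico a n, T c := by
  rw [← Ico_union_Ico_eq_Ico ham hmb, sum_union (Ico_disjoint_Ico_consecutive a m b)]
  congr 1
  refine sum_nbij' (k - ·) (k - ·) ?_ ?_ ?_ ?_ fun c _ => (hT c).symm
  all_goals intro c hc; simp only [mem_Ico] at hc ⊢; omega

section hexRegion

variable {p : ℤ}

lemma mem_hexRegion {x y : ℤ} : (x, y) ∈ hexRegion p ↔
    0 ≤ y ∧ y ≤ 2 * p - 1 ∧ -y ≤ x ∧ x ≤ p + y ∧ y - 2 * p + 1 ≤ x ∧ x ≤ 3 * p - 1 - y := by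
  rw [hexRegion, mem_filter, mem_product, mem_Icc, mem_Icc]
  dsimp only
  constructor
  · rintro ⟨_, h | h⟩ <;> omega
  · intro h
    refine ⟨⟨⟨by omega, by omega⟩, by omega, by omega⟩, ?_⟩
    by_cases hy : y ≤ p - 1
    · left; omega
    · right; omega

lemma reflect_mem_hexRegion {z : ℤ × ℤ} (hz : z ∈ hexRegion p) :
    (p - z.1, 2 * p - 1 - z.2) ∈ hexRegion p := by
  obtain ⟨x, y⟩ := z
  rw [mem_hexRegion] at hz ⊢
  omega

lemma card_hexRegion_filter_lt_snd (c : ℤ) :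
    #{z ∈ hexRegion p | c < z.2} = #{z ∈ hexRegion p | z.2 ≤ 2 * p - 2 - c} :=
  card_filter_lt_eq_card_filter_le_of_involution _ _ _ _ (fun _ => reflect_mem_hexRegion)
    (fun _ _ => by ext <;> simp) (fun _ _ => by ring) c

lemma card_hexRegion_filter_lt_fst (c : ℤ) :
    #{z ∈ hexRegion p | c < z.1} = #{z ∈ hexRegion p | z.1 ≤ p - 1 - c} :=
  card_filter_lt_eq_card_filter_le_of_involution _ _ _ _ (fun _ => reflect_mem_hexRegion)
    (fun _ _ => by ext <;> simp) (fun _ _ => by ring) c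

lemma card_hexRegion_filter_snd_le {c : ℤ} (hc : -1 ≤ c) (hcp : c ≤ p - 1) :
    (#{z ∈ hexRegion p | z.2 ≤ c} : ℤ) = (c + 1) * (c + 1 + p) := by
  induction c, hc using Int.leInduction with
  | base =>
    rw [filter_eq_empty_iff.2 fun ⟨x, y⟩ h => by rw [mem_hexRegion] at h; dsimp only; omega]
    simp
  | succ c hc ih =>
    have hrow : #{z ∈ hexRegion p | z.2 = c + 1} = #(Icc (-(c + 1)) (p + (c + 1))) :=
      card_filter_snd_eq fun x => by rw [mem_hexRegion, mem_Icc]; omega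
    rw [card_filter_le_add_one, hrow, Int.card_Icc, Nat.cast_add, ih (by omega),
      Int.toNat_of_nonneg (by omega)]
    ring

lemma card_hexRegion_filter_fst_le_of_neg {c : ℤ} (hc : -p ≤ c) (hc0 : c ≤ -1) :
    (#{z ∈ hexRegion p | z.1 ≤ c} : ℤ) = (p + c) * (p + c + 1) := by
  induction c, hc using Int.leInduction with
  | base =>
    rw [filter_eq_empty_iff.2 fun ⟨x, y⟩ h => by rw [mem_hexRegion] at h; dsimp only; omega]
    simp
  | succ c hc ih =>
    have hcol : #{z ∈ hexRegion p | z.1 = c + 1} = #(Icc (-(c + 1)) (2 * p + c)) :=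
      card_filter_fst_eq fun y => by rw [mem_hexRegion, mem_Icc]; omega
    rw [card_filter_le_add_one, hcol, Int.card_Icc, Nat.cast_add, ih (by omega),
      Int.toNat_of_nonneg (by omega)]
    ring

lemma card_hexRegion_filter_fst_le {c : ℤ} (hp : 1 ≤ p) (hc : -1 ≤ c) (hcp : c ≤ p - 1) :
    (#{z ∈ hexRegion p | z.1 ≤ c} : ℤ) = p * (p + 1 + 2 * c) := by
  induction c, hc using Int.leInduction with
  | base => rw [card_hexRegion_filter_fst_le_of_neg (by omega) le_rfl]; ring
  | succ c hc ih =>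
    have hcol : #{z ∈ hexRegion p | z.1 = c + 1} = #(Icc 0 (2 * p - 1)) :=
      card_filter_fst_eq fun y => by rw [mem_hexRegion, mem_Icc]; omega
    rw [card_filter_le_add_one, hcol, Int.card_Icc, Nat.cast_add, ih (by omega),
      Int.toNat_of_nonneg (by omega)]
    ring

lemma card_hexRegion (hp : 0 ≤ p) : (#(hexRegion p) : ℤ) = 4 * p ^ 2 := by
  have h := card_filter_lt_eq_card_sub (hexRegion p) Prod.snd (p - 1)
  rw [card_hexRegion_filter_lt_snd, show 2 * p - 2 - (p - 1) = p - 1 by ring,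
    card_hexRegion_filter_snd_le (by omega) le_rfl] at h
  linear_combination -h

theorem sum_sum_abs_sub_snd_hexRegion (hp : 1 ≤ p) :
    15 * ∑ u ∈ hexRegion p, ∑ v ∈ hexRegion p, |u.2 - v.2| =
      138 * p ^ 5 - 20 * p ^ 3 + 2 * p := by
  let G (n : ℤ) : ℤ := -6 * n ^ 5 - 15 * (p + 1) * n ^ 4 + (30 * p ^ 2 - 30 * p - 10) * n ^ 3
    + (60 * p ^ 3 + 45 * p ^ 2 - 15 * p) * n ^ 2 + (60 * p ^ 3 + 15 * p ^ 2 + 1) * n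
  have hlow {n : ℤ} (hn : 0 ≤ n) (hnp : n ≤ p) :
      30 * ∑ c ∈ Ico 0 n, (#{z ∈ hexRegion p | z.2 ≤ c} * #{z ∈ hexRegion p | c < z.2} : ℤ) =
        G n - G 0 := by
    rw [mul_sum, sum_congr rfl fun c hc => ?_, sum_Ico_int_sub G hn]
    rw [mem_Ico] at hc
    rw [card_filter_lt_eq_card_sub, card_hexRegion (by omega),
      card_hexRegion_filter_snd_le (by omega) (by omega)]
    ring
  have hsym (c : ℤ) : (#{z ∈ hexRegion p | z.2 ≤ 2 * p - 2 - c} *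
      #{z ∈ hexRegion p | 2 * p - 2 - c < z.2} : ℤ) =
      #{z ∈ hexRegion p | z.2 ≤ c} * #{z ∈ hexRegion p | c < z.2} := by
    rw [card_hexRegion_filter_lt_snd, card_hexRegion_filter_lt_snd, sub_sub_cancel, mul_comm]
  rw [sum_sum_abs_sub_eq_sum_cuts _ Prod.snd (a := 0) (b := 2 * p - 1) fun z hz => ?_,
    sum_Ico_eq_add_of_reflect _ (m := p) (n := p - 1) (by omega) (by omega) (by ring)
      (by ring) hsym]
  · linear_combination hlow (by omega) le_rfl + hlow (n := p - 1) (by omega) (by omega)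
  · obtain ⟨x, y⟩ := z
    rw [mem_hexRegion] at hz
    rw [mem_Icc]
    omega

theorem sum_sum_abs_sub_fst_hexRegion (hp : 1 ≤ p) :
    15 * ∑ u ∈ hexRegion p, ∑ v ∈ hexRegion p, |u.1 - v.1| =
      178 * p ^ 5 - 50 * p ^ 3 - 8 * p := by
  let Φ (j : ℤ) : ℤ := 2 * (j - 1) * j * (j + 1) * (20 * p ^ 2 + 2 - 3 * j ^ 2)
  have hleft : 30 * ∑ c ∈ Ico (1 - p) 0,
      (#{z ∈ hexRegion p | z.1 ≤ c} * #{z ∈ hexRegion p | c < z.1} : ℤ) = Φ p - Φ 1 := by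
    rw [mul_sum, sum_congr rfl fun c hc => ?_, sum_Ico_int_sub (fun c => Φ (p + c)) (by omega)]
    · rw [add_zero, add_sub_cancel]
    rw [mem_Ico] at hc
    rw [card_filter_lt_eq_card_sub, card_hexRegion (by omega),
      card_hexRegion_filter_fst_le_of_neg (by omega) (by omega)]
    ring
  let G (c : ℤ) : ℤ := 10 * p ^ 2 * c * (9 * p ^ 2 + 1 + 6 * p * c - 4 * c ^ 2)
  have hmid : 30 * ∑ c ∈ Ico 0 p,
      (#{z ∈ hexRegion p | z.1 ≤ c} * #{z ∈ hexRegion p | c < z.1} : ℤ) = G p - G 0 := by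
    rw [mul_sum, sum_congr rfl fun c hc => ?_, sum_Ico_int_sub G (by omega)]
    rw [mem_Ico] at hc
    rw [card_filter_lt_eq_card_sub, card_hexRegion (by omega),
      card_hexRegion_filter_fst_le hp (by omega) (by omega)]
    ring
  have hsym (c : ℤ) : (#{z ∈ hexRegion p | z.1 ≤ p - 1 - c} *
      #{z ∈ hexRegion p | p - 1 - c < z.1} : ℤ) =
      #{z ∈ hexRegion p | z.1 ≤ c} * #{z ∈ hexRegion p | c < z.1} := by
    rw [card_hexRegion_filter_lt_fst, card_hexRegion_filter_lt_fst, sub_sub_cancel, mul_comm]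
  rw [sum_sum_abs_sub_eq_sum_cuts _ Prod.fst (a := 1 - p) (b := 2 * p - 1) fun z hz => ?_,
    sum_Ico_eq_add_of_reflect _ (m := p) (n := 0) (by omega) (by omega) (by ring) (by ring) hsym,
    ← Ico_union_Ico_eq_Ico (b := 0) (by omega) (by omega),
    sum_union (Ico_disjoint_Ico_consecutive _ _ _)]
  · linear_combination 2 * hleft + hmid
  · obtain ⟨x, y⟩ := z
    rw [mem_hexRegion] at hz
    rw [mem_Icc]
    omega

end hexRegion

/-- For `p ≥ 2`, the average distance of the hexagonal square-cell configuration
`H(p)`, i.e. `2W/(|V|(|V|−1))`, equals `(158p⁴ − 35p² − 3)/(120p³ − 30p)`. -/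
theorem avg_dist_hexagonal (p : ℤ) (hp : 2 ≤ p) :
    (∑ u ∈ hexRegion p, ∑ v ∈ hexRegion p, ((|u.1 - v.1| + |u.2 - v.2| : ℤ) : ℚ)) /
        (((hexRegion p).card : ℚ) * (((hexRegion p).card : ℚ) - 1)) =
      (158 * (p : ℚ) ^ 4 - 35 * (p : ℚ) ^ 2 - 3) / (120 * (p : ℚ) ^ 3 - 30 * (p : ℚ)) := by
  have hW : 15 * ∑ u ∈ hexRegion p, ∑ v ∈ hexRegion p, (|u.1 - v.1| + |u.2 - v.2|) =
      316 * p ^ 5 - 70 * p ^ 3 - 6 * p := by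
    simp only [sum_add_distrib, mul_add, sum_sum_abs_sub_fst_hexRegion (by omega : 1 ≤ p),
      sum_sum_abs_sub_snd_hexRegion (by omega : 1 ≤ p)]
    ring
  have hWq : 15 * (∑ u ∈ hexRegion p, ∑ v ∈ hexRegion p,
      ((|u.1 - v.1| + |u.2 - v.2| : ℤ) : ℚ)) = 316 * (p : ℚ) ^ 5 - 70 * p ^ 3 - 6 * p := by
    exact_mod_cast hW
  have hN : ((hexRegion p).card : ℚ) = 4 * (p : ℚ) ^ 2 := by
    exact_mod_cast card_hexRegion (by omega : 0 ≤ p)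
  have hp' : (2 : ℚ) ≤ p := by exact_mod_cast hp
  have hpos : (0 : ℚ) < 4 * p ^ 2 - 1 := by nlinarith
  rw [hN, div_eq_div_iff (mul_pos (by positivity) hpos).ne' (by nlinarith)]
  linear_combination (8 * (p : ℚ) ^ 3 - 2 * p) * hWq
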